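/- Let t = (t_1,t_2,t_3,t_4) ∈ ℝ⁴ and let r_1, r_2, θ_1, θ_2 ∈ ℝ be such that 2−r_1²+r_2² ≥ 0, 6−2r_1²+r_2² ≥ 0, 8−r_2² ≥ 0, 4+r_1²−r_2² ≥ 0 and 2+2r_1²−r_2² ≥ 0. Setting x = r_1·cos θ_1, y = r_1·sin θ_1, u = r_2·cos θ_2, v = r_2·sin θ_2, one has the identity (1−2t_1)(2−x²−y²+u²+v²)/2 + (t_1/50)·u·√(2−x²−y²+u²+v²)·√(6−2x²−2y²+u²+v²)·√(8−u²−v²)·√(4+x²+y²−u²−v²)·√(2+2x²+2y²−u²−v²) + (t_2/50)(6−x²−y²)²(6−2x²−2y²+u²+v²)² + (t_3/50)(6−2x²−2y²+u²+v²)²(4+x²+y²−u²−v²)² + (t_4/100)(6−x²−y²)²(4+x²+y²−u²−v²)² = Γ_t(r_1,r_2) + t_1·cos θ_2 · Ω̄(r_1,r_2). That is, H_t(φ_1(r_1 e^{iθ_1}, r_2 e^{iθ_2})) = Γ_t(r_1,r_2) + t_1 cos θ_2 · Ω̄(r_1,r_2): in the polar coordinates of the chart φ_1, the perturbed Hamiltonian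 splits into a part Γ_t depending only on (r_1,r_2) plus t_1 cos θ_2 times Ω̄. -/
import Mathlib


open Real

/-- `Γ_t(r_1,r_2)`, the part of `H_t ∘ φ_1` in polar coordinates depending only on
`(r_1,r_2)`. -/
noncomputable def Γt (t : Fin 4 → ℝ) (r₁ r₂ : ℝ) : ℝ :=
  (1 - 2 * t 0) * (2 - r₁ ^ 2 + r₂ ^ 2) / 2 +
  (t 1 / 50) * (6 - r₁ ^ 2) ^ 2 * (6 - 2 * r₁ ^ 2 + r₂ ^ 2) ^ 2 +
  (t 2 / 50) * (6 - 2 * r₁ ^ 2 + r₂ ^ 2) ^ 2 * (4 + r₁ ^ 2 - r₂ ^ 2) ^ 2 +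
  (t 3 / 100) * (6 - r₁ ^ 2) ^ 2 * (4 + r₁ ^ 2 - r₂ ^ 2) ^ 2

/-- `Ω̄(r_1,r_2)`. -/
noncomputable def Ωbar (r₁ r₂ : ℝ) : ℝ :=
  (r₂ / 50) * Real.sqrt ((8 - r₂ ^ 2) * (2 + 2 * r₁ ^ 2 - r₂ ^ 2) *
    (6 - 2 * r₁ ^ 2 + r₂ ^ 2) * (4 + r₁ ^ 2 - r₂ ^ 2) * (2 - r₁ ^ 2 + r₂ ^ 2))

/-- In the polar coordinates of the chart `φ_1`, the perturbed Hamiltonian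
`H_t ∘ φ_1` splits as `Γ_t(r_1,r_2) + t_1·cos θ_2·Ω̄(r_1,r_2)`. -/
theorem Ht_polar_splitting
    (t : Fin 4 → ℝ) (r₁ r₂ θ₁ θ₂ : ℝ)
    (h1 : 0 ≤ 2 - r₁ ^ 2 + r₂ ^ 2)
    (h2 : 0 ≤ 6 - 2 * r₁ ^ 2 + r₂ ^ 2)
    (h3 : 0 ≤ 8 - r₂ ^ 2)
    (h4 : 0 ≤ 4 + r₁ ^ 2 - r₂ ^ 2)
    (h5 : 0 ≤ 2 + 2 * r₁ ^ 2 - r₂ ^ 2)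
    (x y u v : ℝ)
    (hx : x = r₁ * Real.cos θ₁) (hy : y = r₁ * Real.sin θ₁)
    (hu : u = r₂ * Real.cos θ₂) (hv : v = r₂ * Real.sin θ₂) :
    (1 - 2 * t 0) * (2 - x ^ 2 - y ^ 2 + u ^ 2 + v ^ 2) / 2 +
    (t 0 / 50) * u *
      Real.sqrt (2 - x ^ 2 - y ^ 2 + u ^ 2 + v ^ 2) *
      Real.sqrt (6 - 2 * x ^ 2 - 2 * y ^ 2 + u ^ 2 + v ^ 2) *
      Real.sqrt (8 - u ^ 2 - v ^ 2) *
      Real.sqrt (4 + x ^ 2 + y ^ 2 - u ^ 2 - v ^ 2) *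
      Real.sqrt (2 + 2 * x ^ 2 + 2 * y ^ 2 - u ^ 2 - v ^ 2) +
    (t 1 / 50) * (6 - x ^ 2 - y ^ 2) ^ 2 *
      (6 - 2 * x ^ 2 - 2 * y ^ 2 + u ^ 2 + v ^ 2) ^ 2 +
    (t 2 / 50) * (6 - 2 * x ^ 2 - 2 * y ^ 2 + u ^ 2 + v ^ 2) ^ 2 *
      (4 + x ^ 2 + y ^ 2 - u ^ 2 - v ^ 2) ^ 2 +
    (t 3 / 100) * (6 - x ^ 2 - y ^ 2) ^ 2 *
      (4 + x ^ 2 + y ^ 2 - u ^ 2 - v ^ 2) ^ 2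
    = Γt t r₁ r₂ + t 0 * Real.cos θ₂ * Ωbar r₁ r₂ := by
  have hxy : x ^ 2 + y ^ 2 = r₁ ^ 2 := by
    have := Real.sin_sq_add_cos_sq θ₁
    rw [hx, hy]; nlinarith [this]
  have huv : u ^ 2 + v ^ 2 = r₂ ^ 2 := by
    have := Real.sin_sq_add_cos_sq θ₂
    rw [hu, hv]; nlinarith [this]
  have e1 : 2 - x ^ 2 - y ^ 2 + u ^ 2 + v ^ 2 = 2 - r₁ ^ 2 + r₂ ^ 2 := by
    rw [← hxy, ← huv]; ring
  have e2 : 6 - 2 * x ^ 2 - 2 * y ^ 2 + u ^ 2 + v ^ 2 = 6 - 2 * r₁ ^ 2 + r₂ ^ 2 := by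
    rw [← hxy, ← huv]; ring
  have e3 : (8 : ℝ) - u ^ 2 - v ^ 2 = 8 - r₂ ^ 2 := by rw [← huv]; ring
  have e4 : 4 + x ^ 2 + y ^ 2 - u ^ 2 - v ^ 2 = 4 + r₁ ^ 2 - r₂ ^ 2 := by
    rw [← hxy, ← huv]; ring
  have e5 : 2 + 2 * x ^ 2 + 2 * y ^ 2 - u ^ 2 - v ^ 2 = 2 + 2 * r₁ ^ 2 - r₂ ^ 2 := by
    rw [← hxy, ← huv]; ring
  have e6 : (6 : ℝ) - x ^ 2 - y ^ 2 = 6 - r₁ ^ 2 := by rw [← hxy]; ring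
  rw [e1, e2, e3, e4, e5, e6, hu]
  have hsq : Real.sqrt (2 - r₁ ^ 2 + r₂ ^ 2) * Real.sqrt (6 - 2 * r₁ ^ 2 + r₂ ^ 2) *
      Real.sqrt (8 - r₂ ^ 2) * Real.sqrt (4 + r₁ ^ 2 - r₂ ^ 2) *
      Real.sqrt (2 + 2 * r₁ ^ 2 - r₂ ^ 2)
      = Real.sqrt ((8 - r₂ ^ 2) * (2 + 2 * r₁ ^ 2 - r₂ ^ 2) *
        (6 - 2 * r₁ ^ 2 + r₂ ^ 2) * (4 + r₁ ^ 2 - r₂ ^ 2) * (2 - r₁ ^ 2 + r₂ ^ 2)) := by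
    rw [← Real.sqrt_mul h1, ← Real.sqrt_mul (by positivity), ← Real.sqrt_mul (by positivity),
      ← Real.sqrt_mul (by positivity)]
    ring_nf
  unfold Γt Ωbar
  rw [← hsq]
  ring
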